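/- Let L : ℝ → ℝ^{n×n} be continuous and let U, U' : ℝ → ℝ^{n×r} and ℝ^{n×r'} respectively (with r ≤ r') be differentiable solutions of the OTD equation dU/dt = L(t)U − U(Uᵀ L(t) U), each with orthonormal columns for all t. If the column space of U(0) is contained in the column space of U'(0), then the column space of U(t) is contained in the column space of U'(t) for all t ≥ 0. -/

import Mathlib

/-!
Since `U'ᵀ U' = 1`, `P = U' U'ᵀ` is the orthogonal projection onto the column space of `U'`,
so the inclusion of column spaces at time `t` says exactly that `W = U - P U` vanishes at `t`.
Substituting both OTD equations, `W` solves the homogeneous linear equation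
`W' = (L - P L - P Lᵀ) W - W (Uᵀ L U)`, whose coefficients are continuous, hence Lipschitz on
compact time intervals; uniqueness of solutions then propagates `W(0) = 0` to all `t ≥ 0`.
-/

open Matrix

attribute [local instance] Matrix.normedAddCommGroup Matrix.normedSpace

open Set

theorem eqOn_zero_of_hasDerivWithinAt_clm_apply {E : Type*} [NormedAddCommGroup E]
    [NormedSpace ℝ E] {A : ℝ → E →L[ℝ] E} {x : ℝ → E} {a b : ℝ}
    (hA : ContinuousOn A (Icc a b)) (hx : ContinuousOn x (Icc a b))
    (hx' : ∀ t ∈ Ico a b, HasDerivWithinAt x (A t (x t)) (Ici t) t) (ha : x a = 0) :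
    EqOn x 0 (Icc a b) := by
  obtain ⟨C, hC⟩ := isCompact_Icc.exists_bound_of_continuousOn hA
  have hlip : ∀ t ∈ Ico a b, LipschitzOnWith C.toNNReal (A t) univ := fun t ht =>
    ((A t).lipschitz.weaken (by
      rw [← NNReal.coe_le_coe, coe_nnnorm]
      exact (hC t (Ico_subset_Icc_self ht)).trans (Real.le_coe_toNNReal C))).lipschitzOnWith
  refine ODE_solution_unique_of_mem_Icc_right (g := fun _ => 0) hlip hx hx'
    (fun _ _ => mem_univ _) continuousOn_const (fun t _ => ?_) (fun _ _ => mem_univ _) ha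
  simpa using hasDerivWithinAt_const t (Ici t) (0 : E)

section

variable {𝕜 : Type*} [NontriviallyNormedField 𝕜] [CompleteSpace 𝕜] {l m n : Type*}
  [Fintype l] [Fintype m] [Fintype n]

/- The global topology instance on matrices is the product topology; the (definitionally equal)
topology of the sup norm has to be found first for continuous linear maps between matrix spaces
to form a normed space. -/
local instance Matrix.normedTopologicalSpace : TopologicalSpace (Matrix m n 𝕜) :=
  Matrix.normedAddCommGroup.toUniformSpace.toTopologicalSpace

noncomputable def Matrix.mulCLM : Matrix l m 𝕜 →L[𝕜] Matrix m n 𝕜 →L[𝕜] Matrix l n 𝕜 :=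
  LinearMap.toContinuousLinearMap
    (LinearMap.toContinuousLinearMap.toLinearMap ∘ₗ mulLinearMap 𝕜)

theorem HasDerivAt.matrix_mul {A : 𝕜 → Matrix l m 𝕜} {B : 𝕜 → Matrix m n 𝕜} {A' B'} {t : 𝕜}
    (hA : HasDerivAt A A' t) (hB : HasDerivAt B B' t) :
    HasDerivAt (fun s => A s * B s) (A' * B t + A t * B') t := by
  rw [add_comm]
  exact mulCLM.hasDerivAt_of_bilinear (fun _ => hA) (fun _ => hB)

theorem HasDerivAt.matrix_transpose {A : 𝕜 → Matrix m n 𝕜} {A'} {t : 𝕜}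
    (hA : HasDerivAt A A' t) : HasDerivAt (fun s => (A s)ᵀ) A'ᵀ t :=
  (LinearMap.toContinuousLinearMap
    (transposeLinearEquiv m n 𝕜 𝕜).toLinearMap).hasFDerivAt.comp_hasDerivAt t hA

theorem Matrix.eq_zero_of_hasDerivAt_mul_sub_mul {A : ℝ → Matrix m m ℝ} {S : ℝ → Matrix n n ℝ}
    {X : ℝ → Matrix m n ℝ} {a : ℝ} (hA : Continuous A) (hS : Continuous S)
    (hX : ∀ t, HasDerivAt X (A t * X t - X t * S t) t) (ha : X a = 0) {t : ℝ} (ht : a ≤ t) :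
    X t = 0 := by
  let R : Matrix n n ℝ →L[ℝ] Matrix m n ℝ →L[ℝ] Matrix m n ℝ := mulCLM.flip
  let V : ℝ → Matrix m n ℝ →L[ℝ] Matrix m n ℝ := fun s => mulCLM (A s) - R (S s)
  have hV : Continuous V := (mulCLM.continuous.comp hA).sub (R.continuous.comp hS)
  have hXc : Continuous X := continuous_iff_continuousAt.2 fun s => (hX s).continuousAt
  exact eqOn_zero_of_hasDerivWithinAt_clm_apply hV.continuousOn hXc.continuousOn
    (fun s _ => (hX s).hasDerivWithinAt) ha ⟨ht, le_rfl⟩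

theorem Matrix.range_mulVecLin_le_iff {R : Type*} [CommRing R] [DecidableEq l]
    {V : Matrix m l R} (hV : Vᵀ * V = 1) {W : Matrix m n R} :
    LinearMap.range W.mulVecLin ≤ LinearMap.range V.mulVecLin ↔ W = V * (Vᵀ * W) := by
  constructor
  · intro h
    refine ext_iff_mulVec.2 fun v => ?_
    obtain ⟨y, hy⟩ := h ⟨v, rfl⟩
    simp only [mulVecLin_apply] at hy
    rw [← hy, ← mulVec_mulVec, ← mulVec_mulVec, ← hy, mulVec_mulVec, mulVec_mulVec,
      Matrix.mul_assoc, hV, Matrix.mul_one]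
  · intro h
    rw [h, mulVecLin_mul]
    exact LinearMap.range_comp_le_range _ _

theorem hasDerivAt_otd_residual {L : Matrix m m ℝ} {U : ℝ → Matrix m n ℝ}
    {U' : ℝ → Matrix m l ℝ} {t : ℝ}
    (hU : HasDerivAt U (L * U t - U t * ((U t)ᵀ * L * U t)) t)
    (hU' : HasDerivAt U' (L * U' t - U' t * ((U' t)ᵀ * L * U' t)) t) :
    HasDerivAt (fun s => U s - U' s * ((U' s)ᵀ * U s))
      ((L - U' t * (U' t)ᵀ * L - U' t * (U' t)ᵀ * Lᵀ) * (U t - U' t * ((U' t)ᵀ * U t)) -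
        (U t - U' t * ((U' t)ᵀ * U t)) * ((U t)ᵀ * L * U t)) t := by
  refine (hU.sub (hU'.matrix_mul (hU'.matrix_transpose.matrix_mul hU))).congr_deriv ?_
  simp only [transpose_sub, transpose_mul, transpose_transpose, Matrix.sub_mul, Matrix.mul_sub,
    Matrix.mul_add, Matrix.mul_assoc]
  abel

end

theorem stmt14_general {n r r' : ℕ}
    (L : ℝ → Matrix (Fin n) (Fin n) ℝ) (hL : Continuous L)
    (U : ℝ → Matrix (Fin n) (Fin r) ℝ) (U' : ℝ → Matrix (Fin n) (Fin r') ℝ)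
    (hU : ∀ t, HasDerivAt U (L t * U t - U t * ((U t)ᵀ * L t * U t)) t)
    (hU' : ∀ t, HasDerivAt U' (L t * U' t - U' t * ((U' t)ᵀ * L t * U' t)) t)
    (hU'o : ∀ t, (U' t)ᵀ * U' t = 1)
    (h0 : LinearMap.range (U 0).mulVecLin ≤ LinearMap.range (U' 0).mulVecLin) :
    ∀ t ≥ (0 : ℝ),
      LinearMap.range (U t).mulVecLin ≤ LinearMap.range (U' t).mulVecLin := by
  intro t ht
  have hUc : Continuous U := continuous_iff_continuousAt.2 fun s => (hU s).continuousAt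
  have hU'c : Continuous U' := continuous_iff_continuousAt.2 fun s => (hU' s).continuousAt
  rw [range_mulVecLin_le_iff (hU'o 0), ← sub_eq_zero] at h0
  rw [range_mulVecLin_le_iff (hU'o t), ← sub_eq_zero]
  refine eq_zero_of_hasDerivAt_mul_sub_mul ?_ ?_
    (fun s => hasDerivAt_otd_residual (hU s) (hU' s)) h0 ht
  · fun_prop
  · fun_prop

/-- Nested OTD subspaces remain nested: if U and U' (with r ≤ r') solve the OTD
equation dU/dt = L(t)U − U(Uᵀ L(t) U), each with orthonormal columns, and the column
space of U(0) is contained in that of U'(0), then the column space of U(t) is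
contained in that of U'(t) for all t ≥ 0. -/
theorem stmt14 {n r r' : ℕ} (hr : r ≤ r')
    (L : ℝ → Matrix (Fin n) (Fin n) ℝ) (hL : Continuous L)
    (U : ℝ → Matrix (Fin n) (Fin r) ℝ) (U' : ℝ → Matrix (Fin n) (Fin r') ℝ)
    (hU : ∀ t, HasDerivAt U (L t * U t - U t * ((U t)ᵀ * L t * U t)) t)
    (hU' : ∀ t, HasDerivAt U' (L t * U' t - U' t * ((U' t)ᵀ * L t * U' t)) t)
    (hUo : ∀ t, (U t)ᵀ * U t = 1) (hU'o : ∀ t, (U' t)ᵀ * U' t = 1)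
    (h0 : LinearMap.range (U 0).mulVecLin ≤ LinearMap.range (U' 0).mulVecLin) :
    ∀ t ≥ (0 : ℝ),
      LinearMap.range (U t).mulVecLin ≤ LinearMap.range (U' t).mulVecLin :=
  stmt14_general L hL U U' hU hU' hU'o h0
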